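/- arXiv:2006.01003 — 2 statements merged into one kernel-verified Lean document; each statement's English description precedes it below -/
import Mathlib

section
/- Let λ ≠ 0 be a fixed real number. There exists a constant C > 0 such that for all sufficiently large X, ∫_{Δ}^{H} |S(λ·t, X)|² dt ≤ C · H · X^{2−γ} · (log X)², where Δ = X^{−12/13} log X, ε = X^{(37−38γ)/26} (log X)^{10}, and H = (log X)²/ε. -/
open Real Finset MeasureTheory Filter
open scoped Classical

/-- `e(t) = exp(2πit)`. -/
noncomputable def e (t : ℝ) : ℂ := Complex.exp (2 * Real.pi * Complex.I * t)

/-- `ψ(t) = {t} - 1/2`. -/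
noncomputable def psi (t : ℝ) : ℝ := Int.fract t - 1/2

/-- `p` is of the Piatetski-Shapiro form of type `γ`, i.e. `p = ⌊n^(1/γ)⌋` for some `n ≥ 1`. -/
def isPS (γ : ℝ) (p : ℕ) : Prop := ∃ n : ℕ, 0 < n ∧ (p : ℤ) = ⌊(n : ℝ) ^ (1/γ)⌋

/-- `S(α,X) = Σ_{λ0 X < p ≤ X, p ∈ ℙ_γ} p^(1-γ) e(αp) log p`. -/
noncomputable def S (γ lam0 X α : ℝ) : ℂ :=
  ∑ p ∈ (Finset.range (⌊X⌋₊ + 1)).filter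
      (fun p : ℕ => p.Prime ∧ lam0 * X < (p : ℝ) ∧ isPS γ p),
    (((p : ℝ) ^ (1 - γ) * Real.log p : ℝ) : ℂ) * e (α * p)

/-- `Σ(α,X) = γ Σ_{λ0 X < p ≤ X} e(αp) log p`. -/
noncomputable def Sig (γ lam0 X α : ℝ) : ℂ :=
  (γ : ℂ) * ∑ p ∈ (Finset.range (⌊X⌋₊ + 1)).filter
      (fun p : ℕ => p.Prime ∧ lam0 * X < (p : ℝ)),
    ((Real.log p : ℝ) : ℂ) * e (α * p)

/-- `Ω(α,X) = Σ_{λ0 X < p ≤ X} p^(1-γ) (ψ(-(p+1)^γ) - ψ(-p^γ)) e(αp) log p`. -/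
noncomputable def Om (γ lam0 X α : ℝ) : ℂ :=
  ∑ p ∈ (Finset.range (⌊X⌋₊ + 1)).filter
      (fun p : ℕ => p.Prime ∧ lam0 * X < (p : ℝ)),
    (((p : ℝ) ^ (1 - γ) * (psi (-((p : ℝ) + 1) ^ γ) - psi (-(p : ℝ) ^ γ)) * Real.log p : ℝ) : ℂ)
      * e (α * p)

/-- `I(α,X) = γ ∫_{λ0 X}^{X} e(αy) dy`. -/
noncomputable def Ig (γ lam0 X α : ℝ) : ℂ := (γ : ℂ) * ∫ y in lam0 * X..X, e (α * y)

/-! Expanding `‖S‖²` and integrating term by term, each diagonal term contributes at most `H`,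
while for `p ≠ q` the integral of `cos (2πλ(p - q)t)` is `O(1/|p - q|)`, whose sum over `q` is
`O(log X)`. The coefficients are at most `X^(1-γ) log X` and there are at most `2 X^γ`
Piatetski-Shapiro numbers up to `X`, so the integral is `O(X^(2-γ) (log X)² (H + log X))`;
finally `log X ≤ H` for large `X` because `γ > 37/38`. -/

lemma e_mul_conj_e (x y : ℝ) : e x * starRingEnd ℂ (e y) = e (x - y) := by
  unfold e
  rw [← Complex.exp_conj, ← Complex.exp_add]
  congr 1
  simp only [map_mul, Complex.conj_I, Complex.conj_ofReal, map_ofNat]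
  push_cast
  ring

lemma re_e (x : ℝ) : (e x).re = cos (2 * π * x) := by
  rw [e, show 2 * (π : ℂ) * Complex.I * x = ((2 * π * x : ℝ) : ℂ) * Complex.I by
    push_cast; ring, Complex.exp_ofReal_mul_I_re]

lemma norm_sum_mul_e_sq (s : Finset ℕ) (a : ℕ → ℝ) (α : ℝ) :
    ‖∑ p ∈ s, (a p : ℂ) * e (α * p)‖ ^ 2 =
      ∑ p ∈ s, ∑ q ∈ s, a p * a q * cos (2 * π * α * (p - q)) := by
  rw [← Complex.ofReal_re (_ ^ 2), Complex.ofReal_pow, ← Complex.mul_conj', map_sum,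
    Finset.sum_mul_sum, Complex.re_sum]
  refine Finset.sum_congr rfl fun p _ => ?_
  rw [Complex.re_sum]
  refine Finset.sum_congr rfl fun q _ => ?_
  rw [map_mul, Complex.conj_ofReal, mul_mul_mul_comm, e_mul_conj_e, ← Complex.ofReal_mul,
    Complex.re_ofReal_mul, re_e]
  ring_nf

lemma abs_integral_cos_mul_le_two_div {c : ℝ} (hc : c ≠ 0) (Δ H : ℝ) :
    |∫ t in Δ..H, cos (c * t)| ≤ 2 / |c| := by
  rw [intervalIntegral.integral_comp_mul_left (fun x => cos x) hc, integral_cos, smul_eq_mul,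
    abs_mul, abs_inv, div_eq_inv_mul]
  gcongr
  linarith [abs_sub (sin (c * H)) (sin (c * Δ)), abs_sin_le_one (c * H), abs_sin_le_one (c * Δ)]

lemma abs_integral_cos_mul_le_sub {Δ H : ℝ} (h : Δ ≤ H) (c : ℝ) :
    |∫ t in Δ..H, cos (c * t)| ≤ H - Δ := by
  have := intervalIntegral.norm_integral_le_of_norm_le_const (a := Δ) (b := H)
    (f := fun t => cos (c * t)) (C := 1) fun t _ => by simpa using abs_cos_le_one (c * t)
  rwa [Real.norm_eq_abs, one_mul, abs_of_nonneg (sub_nonneg.2 h)] at this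

lemma sum_inv_le_harmonic {t : Finset ℕ} {f : ℕ → ℕ} {M : ℕ} (hf : Set.InjOn f t)
    (hmem : ∀ q ∈ t, f q ∈ Icc 1 M) : ∑ q ∈ t, ((f q : ℝ))⁻¹ ≤ harmonic M := by
  rw [← Finset.sum_image (f := fun k : ℕ => (k : ℝ)⁻¹) hf, harmonic_eq_sum_Icc]
  push_cast
  exact Finset.sum_le_sum_of_subset_of_nonneg (by simpa [Finset.subset_iff] using hmem)
    fun _ _ _ => by positivity

lemma sum_erase_inv_abs_sub_le {s : Finset ℕ} {M : ℕ} (hs : ∀ q ∈ s, q ≤ M) {p : ℕ}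
    (hp : p ≤ M) :
    ∑ q ∈ s.erase p, |(p : ℝ) - q|⁻¹ ≤ 2 * harmonic M := by
  rw [← Finset.sum_filter_add_sum_filter_not _ (· < p)]
  have below : ∑ q ∈ (s.erase p).filter (· < p), |(p : ℝ) - q|⁻¹ ≤ harmonic M := by
    refine le_of_eq_of_le (Finset.sum_congr rfl fun q hq => ?_)
      (sum_inv_le_harmonic (f := (p - ·)) ?_ ?_)
    · simp only [Finset.mem_filter] at hq
      rw [Nat.cast_sub hq.2.le, abs_of_nonneg (by simp [hq.2.le])]
    · intro q hq q' hq' h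
      simp only [Finset.coe_filter, Set.mem_ofPred_eq] at hq hq' h
      omega
    · intro q hq
      simp only [Finset.mem_filter, Finset.mem_erase] at hq
      have hqM := hs q hq.1.2
      simp only [Finset.mem_Icc]
      omega
  have above : ∑ q ∈ (s.erase p).filter (¬ · < p), |(p : ℝ) - q|⁻¹ ≤ harmonic M := by
    refine le_of_eq_of_le (Finset.sum_congr rfl fun q hq => ?_)
      (sum_inv_le_harmonic (f := (· - p)) ?_ ?_)
    · simp only [Finset.mem_filter, not_lt] at hq
      rw [Nat.cast_sub hq.2, abs_sub_comm, abs_of_nonneg (by simp [hq.2])]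
    · intro q hq q' hq' h
      simp only [Finset.coe_filter, Finset.mem_erase, Set.mem_ofPred_eq] at hq hq' h
      omega
    · intro q hq
      simp only [Finset.mem_filter, Finset.mem_erase] at hq
      have hqM := hs q hq.1.2
      simp only [Finset.mem_Icc]
      omega
  linarith

lemma integral_norm_sum_mul_e_sq_eq (s : Finset ℕ) (a : ℕ → ℝ) (lam Δ H : ℝ) :
    ∫ t in Δ..H, ‖∑ p ∈ s, (a p : ℂ) * e (lam * t * p)‖ ^ 2 =
      ∑ p ∈ s, ∑ q ∈ s, a p * a q * ∫ t in Δ..H, cos (2 * π * lam * (p - q) * t) := by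
  have hcont (p q : ℕ) : Continuous fun t => a p * a q * cos (2 * π * lam * (p - q) * t) := by
    fun_prop
  have hpoint (t : ℝ) : ‖∑ p ∈ s, (a p : ℂ) * e (lam * t * p)‖ ^ 2 =
      ∑ p ∈ s, ∑ q ∈ s, a p * a q * cos (2 * π * lam * (p - q) * t) := by
    rw [norm_sum_mul_e_sq]
    refine Finset.sum_congr rfl fun p _ => Finset.sum_congr rfl fun q _ => ?_
    ring_nf
  simp_rw [hpoint, ← intervalIntegral.integral_const_mul]
  rw [intervalIntegral.integral_finsetSum fun p _ =>
    (continuous_finsetSum s fun q _ => hcont p q).intervalIntegrable Δ H]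
  refine Finset.sum_congr rfl fun p _ => ?_
  exact intervalIntegral.integral_finsetSum fun q _ => (hcont p q).intervalIntegrable Δ H

theorem integral_norm_sum_mul_e_sq_le {s : Finset ℕ} {M : ℕ} (hs : ∀ p ∈ s, p ≤ M)
    {a : ℕ → ℝ} {A : ℝ} (ha : ∀ p ∈ s, |a p| ≤ A) {lam : ℝ} (hlam : lam ≠ 0)
    {Δ H : ℝ} (hΔ : 0 ≤ Δ) (hΔH : Δ ≤ H) :
    ∫ t in Δ..H, ‖∑ p ∈ s, (a p : ℂ) * e (lam * t * p)‖ ^ 2 ≤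
      #s * A ^ 2 * (H + 2 * harmonic M / (π * |lam|)) := by
  set K : ℕ → ℕ → ℝ := fun p q => ∫ t in Δ..H, cos (2 * π * lam * (p - q) * t)
  have hrow : ∀ p ∈ s,
      ∑ q ∈ s, a p * a q * K p q ≤ A ^ 2 * (H + 2 * harmonic M / (π * |lam|)) := by
    intro p hp
    have hterm : ∀ q ∈ s, a p * a q * K p q ≤ A ^ 2 * |K p q| := fun q hq =>
      calc a p * a q * K p q ≤ |a p| * |a q| * |K p q| := by
            rw [← abs_mul, ← abs_mul]; exact le_abs_self _
        _ ≤ A ^ 2 * |K p q| := by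
            rw [sq]; gcongr
            exacts [(abs_nonneg _).trans (ha p hp), ha p hp, ha q hq]
    have hdiag : |K p p| ≤ H := by
      linarith [abs_integral_cos_mul_le_sub hΔH (2 * π * lam * (p - p))]
    have hoff : ∀ q ∈ s.erase p, |K p q| ≤ |(p : ℝ) - q|⁻¹ / (π * |lam|) := by
      intro q hq
      have hpq : (p : ℝ) - q ≠ 0 :=
        sub_ne_zero.2 (by exact_mod_cast (Finset.ne_of_mem_erase hq).symm)
      refine (abs_integral_cos_mul_le_two_div (by positivity) Δ H).trans_eq ?_
      rw [abs_mul, abs_mul, abs_of_pos (by positivity : (0 : ℝ) < 2 * π)]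
      field_simp
    calc ∑ q ∈ s, a p * a q * K p q ≤ ∑ q ∈ s, A ^ 2 * |K p q| := Finset.sum_le_sum hterm
      _ = A ^ 2 * (|K p p| + ∑ q ∈ s.erase p, |K p q|) := by
          rw [← Finset.mul_sum, Finset.add_sum_erase s (fun q => |K p q|) hp]
      _ ≤ A ^ 2 * (H + ∑ q ∈ s.erase p, |(p : ℝ) - q|⁻¹ / (π * |lam|)) :=
          mul_le_mul_of_nonneg_left (add_le_add hdiag (Finset.sum_le_sum hoff)) (sq_nonneg A)
      _ ≤ A ^ 2 * (H + 2 * harmonic M / (π * |lam|)) := by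
          rw [← Finset.sum_div]
          gcongr
          exact sum_erase_inv_abs_sub_le hs (hs p hp)
  calc ∫ t in Δ..H, ‖∑ p ∈ s, (a p : ℂ) * e (lam * t * p)‖ ^ 2
      = ∑ p ∈ s, ∑ q ∈ s, a p * a q * K p q := integral_norm_sum_mul_e_sq_eq s a lam Δ H
    _ ≤ ∑ p ∈ s, A ^ 2 * (H + 2 * harmonic M / (π * |lam|)) := Finset.sum_le_sum hrow
    _ = #s * A ^ 2 * (H + 2 * harmonic M / (π * |lam|)) := by
        rw [Finset.sum_const, nsmul_eq_mul, mul_assoc]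

lemma card_le_of_isPS {γ : ℝ} (hγ : 0 < γ) {X : ℝ} (hX : 0 ≤ X) {s : Finset ℕ}
    (hs : ∀ p ∈ s, (p : ℝ) ≤ X ∧ isPS γ p) : (#s : ℝ) ≤ (X + 1) ^ γ := by
  have hsub :
      s ⊆ (Icc 1 ⌊(X + 1) ^ γ⌋₊).image fun n : ℕ => ⌊(n : ℝ) ^ (1 / γ)⌋₊ := by
    intro p hp
    obtain ⟨hpX, n, hn, hpn⟩ := hs p hp
    have hroot : 0 ≤ (n : ℝ) ^ (1 / γ) := by positivity
    obtain ⟨hle, hlt⟩ := Int.floor_eq_iff.1 hpn.symm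
    push_cast at hle hlt
    refine Finset.mem_image.2 ⟨n, Finset.mem_Icc.2 ⟨hn, Nat.le_floor ?_⟩,
      (Nat.floor_eq_iff hroot).2 ⟨hle, hlt⟩⟩
    calc (n : ℝ) = ((n : ℝ) ^ (1 / γ)) ^ γ := by
          rw [← rpow_mul n.cast_nonneg, one_div_mul_cancel hγ.ne', rpow_one]
      _ ≤ (X + 1) ^ γ := by gcongr; linarith
  calc (#s : ℝ) ≤ #(Icc 1 ⌊(X + 1) ^ γ⌋₊) := by
        exact_mod_cast (Finset.card_le_card hsub).trans Finset.card_image_le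
    _ ≤ (X + 1) ^ γ := by
        rw [Nat.card_Icc, Nat.add_sub_cancel]
        exact Nat.floor_le (by positivity)

theorem integral_norm_S_sq_le {γ : ℝ} (hγ0 : 0 < γ) (hγ1 : γ ≤ 1) (lam0 : ℝ) {lam : ℝ}
    (hlam : lam ≠ 0) {X : ℝ} (hX : 1 ≤ X) {Δ H : ℝ} (hΔ : 0 ≤ Δ) (hΔH : Δ ≤ H) :
    ∫ t in Δ..H, ‖S γ lam0 X (lam * t)‖ ^ 2 ≤
      2 * X ^ (2 - γ) * log X ^ 2 * (H + 2 * (1 + log X) / (π * |lam|)) := by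
  set F :=
    (range (⌊X⌋₊ + 1)).filter fun p : ℕ => p.Prime ∧ lam0 * X < (p : ℝ) ∧ isPS γ p
  have hFX : ∀ p ∈ F, p ≤ ⌊X⌋₊ := fun p hp =>
    Nat.lt_succ_iff.1 (Finset.mem_range.1 (Finset.mem_filter.1 hp).1)
  have hFX' : ∀ p ∈ F, (p : ℝ) ≤ X := fun p hp =>
    (Nat.cast_le.2 (hFX p hp)).trans (Nat.floor_le (by linarith))
  have hcard : (#F : ℝ) ≤ 2 * X ^ γ :=
    calc (#F : ℝ) ≤ (X + 1) ^ γ :=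
          card_le_of_isPS hγ0 (by linarith) fun p hp =>
            ⟨hFX' p hp, (Finset.mem_filter.1 hp).2.2.2⟩
      _ ≤ (2 * X) ^ γ := by gcongr; linarith
      _ = 2 ^ γ * X ^ γ := mul_rpow (by norm_num) (by linarith)
      _ ≤ 2 * X ^ γ := by gcongr; exact rpow_le_self_of_one_le (by norm_num) hγ1
  have hcoeff : ∀ p ∈ F, |(p : ℝ) ^ (1 - γ) * log p| ≤ X ^ (1 - γ) * log X := by
    intro p hp
    have hp1 : (1 : ℝ) ≤ p := by exact_mod_cast (Finset.mem_filter.1 hp).2.1.one_le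
    rw [abs_of_nonneg (by have := log_nonneg hp1; positivity)]
    gcongr <;> exact hFX' p hp
  have hpow : X ^ γ * (X ^ (1 - γ) * log X) ^ 2 = X ^ (2 - γ) * log X ^ 2 := by
    rw [mul_pow, ← mul_assoc, ← rpow_natCast, ← rpow_mul (by linarith),
      ← rpow_add (by linarith)]
    congr 2
    push_cast
    ring
  calc ∫ t in Δ..H, ‖S γ lam0 X (lam * t)‖ ^ 2
      ≤ #F * (X ^ (1 - γ) * log X) ^ 2 * (H + 2 * harmonic ⌊X⌋₊ / (π * |lam|)) :=
        integral_norm_sum_mul_e_sq_le hFX hcoeff hlam hΔ hΔH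
    _ ≤ 2 * X ^ γ * (X ^ (1 - γ) * log X) ^ 2 * (H + 2 * (1 + log X) / (π * |lam|)) := by
        have hharm := harmonic_floor_le_one_add_log X hX
        have hharm0 : (0 : ℝ) ≤ harmonic ⌊X⌋₊ := by
          rw [harmonic]; push_cast; positivity
        gcongr
        exact add_nonneg (hΔ.trans hΔH) (div_nonneg (by linarith) (by positivity))
    _ = 2 * X ^ (2 - γ) * log X ^ 2 * (H + 2 * (1 + log X) / (π * |lam|)) := by
        rw [mul_assoc 2, hpow, ← mul_assoc]

lemma eventually_log_le_log_sq_div {κ : ℝ} (hκ : κ < 0) :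
    ∀ᶠ X : ℝ in atTop, log X ≤ log X ^ 2 / (X ^ κ * log X ^ 10) := by
  filter_upwards [(isLittleO_log_rpow_atTop (by linarith : 0 < -κ / 9)).bound one_pos,
    eventually_gt_atTop 1] with X hlog hX
  have hL : 0 < log X := log_pos hX
  rw [one_mul, norm_of_nonneg hL.le, norm_of_nonneg (by positivity)] at hlog
  have hlog9 : log X ^ 9 * X ^ κ ≤ 1 :=
    calc log X ^ 9 * X ^ κ ≤ (X ^ (-κ / 9)) ^ 9 * X ^ κ := by gcongr
      _ = 1 := by
        rw [← rpow_natCast, ← rpow_mul (by linarith), ← rpow_add (by linarith)]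
        norm_num
  rw [le_div_iff₀ (by positivity)]
  nlinarith [pow_pos hL 2]

theorem meanvalue_S_on_DeltaH_general (γ lam0 lam : ℝ) (hγ1 : 37/38 < γ) (hγ2 : γ < 1)
    (hlam : lam ≠ 0) :
    ∃ C : ℝ, 0 < C ∧ ∃ X0 : ℝ, ∀ X : ℝ, X0 ≤ X →
      (∫ t in (X ^ (-(12 : ℝ)/13) * Real.log X)..(Real.log X ^ 2 /
            (X ^ ((37 - 38 * γ) / 26) * Real.log X ^ 10)),
          ‖S γ lam0 X (lam * t)‖ ^ 2) ≤
        C * (Real.log X ^ 2 / (X ^ ((37 - 38 * γ) / 26) * Real.log X ^ 10)) *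
          X ^ (2 - γ) * Real.log X ^ 2 := by
  refine ⟨2 * (1 + 4 / (π * |lam|)), by positivity, eventually_atTop.1 ?_⟩
  filter_upwards [eventually_ge_atTop 3,
    eventually_log_le_log_sq_div (by linarith : (37 - 38 * γ) / 26 < 0)] with X hX hLH
  set H := log X ^ 2 / (X ^ ((37 - 38 * γ) / 26) * log X ^ 10)
  have hL : 1 ≤ log X := by
    rw [le_log_iff_exp_le (by linarith)]
    linarith [exp_one_lt_d9]
  have hΔL : X ^ (-(12 : ℝ) / 13) * log X ≤ log X :=
    mul_le_of_le_one_left (by linarith)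
      (rpow_le_one_of_one_le_of_nonpos (by linarith) (by norm_num))
  refine (integral_norm_S_sq_le (by linarith) hγ2.le lam0 hlam (by linarith) (by positivity)
    (hΔL.trans hLH)).trans ?_
  have hlog_term : 2 * (1 + log X) / (π * |lam|) ≤ H * (4 / (π * |lam|)) := by
    rw [mul_div_assoc']
    exact div_le_div_of_nonneg_right (by linarith) (by positivity)
  calc 2 * X ^ (2 - γ) * log X ^ 2 * (H + 2 * (1 + log X) / (π * |lam|))
      ≤ 2 * X ^ (2 - γ) * log X ^ 2 * (H + H * (4 / (π * |lam|))) := by gcongr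
    _ = 2 * (1 + 4 / (π * |lam|)) * H * X ^ (2 - γ) * log X ^ 2 := by ring

theorem meanvalue_S_on_DeltaH (γ lam0 lam : ℝ) (hγ1 : 37/38 < γ) (hγ2 : γ < 1)
    (hl1 : 0 < lam0) (hl2 : lam0 < 1) (hlam : lam ≠ 0) :
    ∃ C : ℝ, 0 < C ∧ ∃ X0 : ℝ, ∀ X : ℝ, X0 ≤ X →
      (∫ t in (X ^ (-(12 : ℝ)/13) * Real.log X)..(Real.log X ^ 2 /
            (X ^ ((37 - 38 * γ) / 26) * Real.log X ^ 10)),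
          ‖S γ lam0 X (lam * t)‖ ^ 2) ≤
        C * (Real.log X ^ 2 / (X ^ ((37 - 38 * γ) / 26) * Real.log X ^ 10)) *
          X ^ (2 - γ) * Real.log X ^ 2 :=
  meanvalue_S_on_DeltaH_general γ lam0 lam hγ1 hγ2 hlam
end

section
/- Let λ1, λ2, λ3 be non-zero real numbers, not all of the same sign, and let η be real. Then there exist λ0 with 0 < λ0 < 1 and a constant c > 0 such that for all sufficiently large X and all ε with 0 < ε < 1, the three-dimensional Lebesgue measure of the set { (y1, y2, y3) ∈ [λ0·X, X]³ : |λ1·y1 + λ2·y2 + λ3·y3 + η| ≤ 3ε/4 } is at least c · ε · X². -/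
open Real Finset MeasureTheory Filter
open scoped Classical

/-
Some `λᵢ` with `i ∈ {1, 2}` has sign opposite to `λ₃`; swapping `y₁` and `y₂` preserves volume,
so say `λ₁ λ₃ < 0`. With `δ = 3ε/4`, a point lies in the slab iff `y₃` is within `δ / |λ₃|` of
`g(y₁, y₂) = α y₁ + β y₂ + c`, where `α = -λ₁/λ₃ > 0`. On a square of side `λ₀ X` placed at
`(r X, λ₀ X)`, with `λ₀` small compared to `r`, `α`, `|β|`, the linear part of `g` stays in
`[2 λ₀ X, X / 2]`; hence for large `X` the segment of height `δ / |λ₃|` above the graph of `g`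
stays in the cube, and by Cavalieri the slab has volume at least `(λ₀ X)² δ / |λ₃|`.
-/

lemma volume_mul_le_of_forall_Ioo_mem {α β : Type*} [MeasureSpace α] [MeasureSpace β]
    [SFinite (volume : Measure α)] [SFinite (volume : Measure β)]
    {s : Set (α × β)} (hs : MeasurableSet s) {g : α × β → ℝ} (hg : Measurable g) {d : ℝ}
    {T : Set (α × β × ℝ)} (hT : ∀ p ∈ s, ∀ t ∈ Set.Ioo (g p) (g p + d), (p.1, p.2, t) ∈ T) :
    volume s * ENNReal.ofReal d ≤ volume T := calc
  volume s * ENNReal.ofReal d = volume (regionBetween g (fun p ↦ g p + d) s) := by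
    rw [Measure.volume_eq_prod (α × β) ℝ,
      volume_regionBetween_eq_lintegral' hg (by fun_prop) hs]
    simp [mul_comm]
  _ ≤ volume (MeasurableEquiv.prodAssoc ⁻¹' T) := measure_mono fun q hq ↦ hT _ hq.1 _ hq.2
  _ = volume T := volume_preserving_prodAssoc.measure_preimage_equiv T

def cubeSlab (l1 l2 l3 η a b δ : ℝ) : Set (ℝ × ℝ × ℝ) :=
  {y | y.1 ∈ Set.Icc a b ∧ y.2.1 ∈ Set.Icc a b ∧ y.2.2 ∈ Set.Icc a b ∧
    |l1 * y.1 + l2 * y.2.1 + l3 * y.2.2 + η| ≤ δ}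

lemma volume_cubeSlab_comm (l1 l2 l3 η a b δ : ℝ) :
    volume (cubeSlab l1 l2 l3 η a b δ) = volume (cubeSlab l2 l1 l3 η a b δ) := by
  let e : ℝ × ℝ × ℝ ≃ᵐ ℝ × ℝ × ℝ :=
    (MeasurableEquiv.prodAssoc.symm.trans
      (MeasurableEquiv.prodComm.prodCongr (MeasurableEquiv.refl ℝ))).trans
      MeasurableEquiv.prodAssoc
  have he : MeasurePreserving e := volume_preserving_prodAssoc.comp
    ((Measure.measurePreserving_swap.prod (MeasurePreserving.id volume)).comp
      volume_preserving_prodAssoc.symm)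
  rw [← he.measure_preimage_equiv]
  congr 1
  ext y
  simp only [cubeSlab, e, MeasurableEquiv.prodAssoc, Equiv.prodAssoc, MeasurableEquiv.symm_mk,
    Equiv.symm_mk, MeasurableEquiv.prodCongr, MeasurableEquiv.prodComm,
    MeasurableEquiv.refl_toEquiv, Set.mem_Icc, Set.preimage_ofPred_eq, MeasurableEquiv.trans_apply,
    MeasurableEquiv.coe_mk, Equiv.coe_fn_mk, Equiv.prodCongr_apply, Equiv.coe_prodComm,
    Equiv.coe_refl, Prod.map_apply, Prod.swap_prod_mk, id_eq, Set.mem_ofPred_eq]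
  rw [add_comm (l1 * y.2.1)]
  tauto

lemma volume_mul_le_volume_cubeSlab {l1 l2 l3 η a b δ : ℝ} (h3 : l3 ≠ 0) {s : Set (ℝ × ℝ)}
    (hs : MeasurableSet s) (hsub : s ⊆ Set.Icc a b ×ˢ Set.Icc a b)
    (hg : ∀ p ∈ s, a ≤ -(l1 * p.1 + l2 * p.2 + η) / l3 ∧
      -(l1 * p.1 + l2 * p.2 + η) / l3 + δ / |l3| ≤ b) :
    volume s * ENNReal.ofReal (δ / |l3|) ≤ volume (cubeSlab l1 l2 l3 η a b δ) := by
  refine volume_mul_le_of_forall_Ioo_mem (g := fun p ↦ -(l1 * p.1 + l2 * p.2 + η) / l3) hs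
    (by fun_prop) fun p hp t ⟨ht, ht'⟩ ↦ ?_
  obtain ⟨hp1, hp2⟩ := hsub hp
  obtain ⟨hga, hgb⟩ := hg p hp
  have hdist : |t - -(l1 * p.1 + l2 * p.2 + η) / l3| ≤ δ / |l3| :=
    abs_le.mpr ⟨by linarith, by linarith⟩
  refine ⟨hp1, hp2, ⟨by linarith, by linarith⟩, ?_⟩
  calc |l1 * p.1 + l2 * p.2 + l3 * t + η|
      = |l3| * |t - -(l1 * p.1 + l2 * p.2 + η) / l3| := by
        rw [← abs_mul]; congr 1; field_simp; ring
    _ ≤ δ := (le_div_iff₀' (abs_pos.mpr h3)).mp hdist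

lemma exists_box_linear_mem_Icc {α : ℝ} (hα : 0 < α) (β : ℝ) :
    ∃ r l : ℝ, 0 < l ∧ l ≤ r ∧ r + l ≤ 1 ∧ ∀ X, 0 ≤ X →
      ∀ u ∈ Set.Icc (r * X) ((r + l) * X), ∀ v ∈ Set.Icc (l * X) (2 * l * X),
        α * u + β * v ∈ Set.Icc (2 * l * X) (X / 2) := by
  -- `κ` dominates `1`, `α` and `|β|`: then `α r ≤ 1/4`, and `l = α r / (4 κ)` keeps the
  -- `β`-term below `α r / 2`.
  set κ := 1 + α + |β|
  have hκ : 0 < κ := by positivity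
  set r := 1 / (4 * κ)
  set l := α * r / (4 * κ)
  have hr : 4 * κ * r = 1 := mul_one_div_cancel (by positivity)
  have hl : 4 * κ * l = α * r := mul_div_cancel₀ _ (by positivity)
  have hr0 : 0 < r := by positivity
  have hl0 : 0 < l := by positivity
  have hβ := abs_nonneg β
  have hlr : 4 * l ≤ r := by nlinarith
  refine ⟨r, l, hl0, by linarith, by nlinarith, fun X hX u ⟨hu, hu'⟩ v ⟨hv, hv'⟩ ↦ ?_⟩
  have hβv : |β * v| ≤ 2 * |β| * l * X := by
    rw [abs_mul, abs_of_nonneg (a := v) (by nlinarith)]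
    nlinarith [mul_le_mul_of_nonneg_left hv' hβ]
  have hαu : α * r * X ≤ α * u := by nlinarith
  have hαu' : α * u ≤ α * (r + l) * X := by nlinarith
  obtain ⟨hβv, hβv'⟩ := abs_le.mp hβv
  constructor
  · nlinarith
  · nlinarith

lemma exists_volume_cubeSlab_ge_of_mul_neg {l1 l3 : ℝ} (l2 η : ℝ) (h3 : l3 ≠ 0)
    (h13 : l1 * l3 < 0) :
    ∃ lam0 : ℝ, 0 < lam0 ∧ lam0 < 1 ∧ ∃ c : ℝ, 0 < c ∧ ∃ X0 : ℝ, ∀ X : ℝ, X0 ≤ X →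
      ∀ δ : ℝ, 0 < δ → δ ≤ 1 →
        ENNReal.ofReal (c * δ * X ^ 2) ≤ volume (cubeSlab l1 l2 l3 η (lam0 * X) X δ) := by
  have hα : 0 < -l1 / l3 := by
    rw [show -l1 / l3 = -(l1 * l3) / l3 ^ 2 by field_simp]
    exact div_pos (neg_pos.mpr h13) (by positivity)
  obtain ⟨r, l, hl, hlr, hrl, hbox⟩ := exists_box_linear_mem_Icc hα (-l2 / l3)
  have h3' : 0 < |l3| := abs_pos.mpr h3
  refine ⟨l, hl, by linarith, l ^ 2 / |l3|, by positivity, 2 * (|η / l3| + 1 / |l3|) / l,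
    fun X hX δ hδ hδ1 ↦ ?_⟩
  have hlX : 2 * (|η / l3| + 1 / |l3|) ≤ l * X := by rwa [div_le_iff₀' hl] at hX
  have hX0 : 0 ≤ X := by nlinarith [show 0 ≤ |η / l3| + 1 / |l3| by positivity]
  have hlX0 : 0 ≤ l * X := mul_nonneg hl.le hX0
  calc ENNReal.ofReal (l ^ 2 / |l3| * δ * X ^ 2)
      = volume (Set.Icc (r * X) ((r + l) * X) ×ˢ Set.Icc (l * X) (2 * l * X)) *
          ENNReal.ofReal (δ / |l3|) := by
        rw [Measure.volume_eq_prod, Measure.prod_prod, Real.volume_Icc, Real.volume_Icc,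
          show (r + l) * X - r * X = l * X by ring, show 2 * l * X - l * X = l * X by ring,
          ← ENNReal.ofReal_mul hlX0, ← ENNReal.ofReal_mul (by positivity)]
        congr 1
        field_simp
    _ ≤ volume (cubeSlab l1 l2 l3 η (l * X) X δ) := by
      refine volume_mul_le_volume_cubeSlab h3 (measurableSet_Icc.prod measurableSet_Icc) ?_
        fun p ⟨hp1, hp2⟩ ↦ ?_
      · rintro p ⟨⟨hp1, hp1'⟩, hp2, hp2'⟩
        refine ⟨⟨?_, ?_⟩, ?_, ?_⟩ <;> nlinarith
      · obtain ⟨hlo, hhi⟩ := hbox X hX0 p.1 hp1 p.2 hp2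
        have hδ' : δ / |l3| ≤ 1 / |l3| := div_le_div_of_nonneg_right hδ1 h3'.le
        rw [show -(l1 * p.1 + l2 * p.2 + η) / l3 = -l1 / l3 * p.1 + -l2 / l3 * p.2 - η / l3 by
          ring]
        constructor <;>
          linarith [one_div_nonneg.mpr h3'.le, neg_abs_le (η / l3), le_abs_self (η / l3)]

lemma mul_neg_or_mul_neg_of_not_same_sign {l1 l2 l3 : ℝ} (h1 : l1 ≠ 0) (h2 : l2 ≠ 0)
    (h3 : l3 ≠ 0) (hsign : ¬ ((0 < l1 ∧ 0 < l2 ∧ 0 < l3) ∨ (l1 < 0 ∧ l2 < 0 ∧ l3 < 0))) :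
    l1 * l3 < 0 ∨ l2 * l3 < 0 := by
  rcases h1.lt_or_gt with h1 | h1 <;> rcases h2.lt_or_gt with h2 | h2 <;>
    rcases h3.lt_or_gt with h3 | h3
  all_goals first
    | exact (hsign (by tauto)).elim
    | exact Or.inl (by nlinarith)
    | exact Or.inr (by nlinarith)

lemma exists_volume_cubeSlab_ge {l1 l2 l3 : ℝ} (η : ℝ) (h1 : l1 ≠ 0) (h2 : l2 ≠ 0)
    (h3 : l3 ≠ 0) (hsign : ¬ ((0 < l1 ∧ 0 < l2 ∧ 0 < l3) ∨ (l1 < 0 ∧ l2 < 0 ∧ l3 < 0))) :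
    ∃ lam0 : ℝ, 0 < lam0 ∧ lam0 < 1 ∧ ∃ c : ℝ, 0 < c ∧ ∃ X0 : ℝ, ∀ X : ℝ, X0 ≤ X →
      ∀ δ : ℝ, 0 < δ → δ ≤ 1 →
        ENNReal.ofReal (c * δ * X ^ 2) ≤ volume (cubeSlab l1 l2 l3 η (lam0 * X) X δ) := by
  rcases mul_neg_or_mul_neg_of_not_same_sign h1 h2 h3 hsign with h13 | h23
  · exact exists_volume_cubeSlab_ge_of_mul_neg l2 η h3 h13
  · simpa only [volume_cubeSlab_comm l2 l1] using exists_volume_cubeSlab_ge_of_mul_neg l1 η h3 h23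

theorem volume_lower_bound (lam1 lam2 lam3 η : ℝ)
    (h1 : lam1 ≠ 0) (h2 : lam2 ≠ 0) (h3 : lam3 ≠ 0)
    (hsign : ¬ ((0 < lam1 ∧ 0 < lam2 ∧ 0 < lam3) ∨ (lam1 < 0 ∧ lam2 < 0 ∧ lam3 < 0))) :
    ∃ lam0 : ℝ, 0 < lam0 ∧ lam0 < 1 ∧ ∃ c : ℝ, 0 < c ∧ ∃ X0 : ℝ, ∀ X : ℝ, X0 ≤ X →
      ∀ ε : ℝ, 0 < ε → ε < 1 →
        ENNReal.ofReal (c * ε * X ^ 2) ≤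
          volume {y : ℝ × ℝ × ℝ |
            y.1 ∈ Set.Icc (lam0 * X) X ∧ y.2.1 ∈ Set.Icc (lam0 * X) X ∧
            y.2.2 ∈ Set.Icc (lam0 * X) X ∧
            |lam1 * y.1 + lam2 * y.2.1 + lam3 * y.2.2 + η| ≤ 3 * ε / 4} := by
  obtain ⟨lam0, hlam0, hlam0', c, hc, X0, hbound⟩ := exists_volume_cubeSlab_ge η h1 h2 h3 hsign
  refine ⟨lam0, hlam0, hlam0', 3 * c / 4, by positivity, X0, fun X hX ε hε hε1 ↦ ?_⟩
  calc ENNReal.ofReal (3 * c / 4 * ε * X ^ 2) = ENNReal.ofReal (c * (3 * ε / 4) * X ^ 2) := by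
        ring_nf
    _ ≤ _ := hbound X hX _ (by positivity) (by linarith)
end
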